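/- arXiv:2106.08340 — 2 statements merged into one kernel-verified Lean document; each statement's English description precedes it below -/
import Mathlib

section
/- For every nonnegative integer m, the identity ∑_{l=0}^{m+1} (B_{2l}/(2l)!) · (2^{1-2l} - 1) · B_{2m+3-2l}^{(2m+3)}(m + 1/2) / (2m+3-2l)! = 0 holds, where B_{2l} are Bernoulli numbers. -/
open PowerSeries

/-- The generalized Bernoulli polynomial `B_n^{(m)}(t)`, defined by the generating
function `(x/(e^x - 1))^m · e^{tx} = ∑_{n≥0} B_n^{(m)}(t) x^n / n!`. -/
noncomputable def genBernoulli (m : ℕ) (t : ℚ) (n : ℕ) : ℚ :=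
  n.factorial *
    PowerSeries.coeff (R := ℚ) n
      ((bernoulliPowerSeries ℚ) ^ m * PowerSeries.rescale t (PowerSeries.exp ℚ))

namespace StmtAux

noncomputable def E (t : ℚ) : ℚ⟦X⟧ := rescale t (exp ℚ)
noncomputable def Bb : ℚ⟦X⟧ := bernoulliPowerSeries ℚ
noncomputable def Dd : ℚ⟦X⟧ := exp ℚ - 1

noncomputable def A : ℚ⟦X⟧ := Bb * E (1/2)

lemma E_mul (a b : ℚ) : E a * E b = E (a + b) := exp_mul_exp_eq_exp_add a b

lemma E_one : E 1 = exp ℚ := by simp [E, rescale_one]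

lemma E_zero : E 0 = 1 := by
  simp [E, rescale_zero]

lemma D_ne : Dd ≠ 0 := by
  intro h
  have := congrArg (coeff (R := ℚ) 1) h
  simp [Dd, coeff_exp] at this

lemma hBD : Bb * Dd = X := bernoulliPowerSeries_mul_exp_sub_one ℚ

lemma hsq : E (1/2) * E (1/2) = E 1 := by rw [E_mul]; norm_num

lemma hAD : A * Dd = X * E (1/2) := by
  rw [A, mul_right_comm, hBD]

lemma hEinv : E (-1) * E 1 = 1 := by rw [E_mul]; norm_num [E_zero]

lemma hD1 : Dd = E 1 - 1 := by rw [E_one, Dd]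


lemma rescale_E (c t : ℚ) : rescale c (E t) = E (t * c) := by
  rw [E, E, rescale_rescale]

lemma hAeven : rescale (-1 : ℚ) A = A := by
  apply mul_right_cancel₀ D_ne
  have h1 : rescale (-1:ℚ) A * (E (-1) - 1) = -(X * E (-1/2)) := by
    have h := congrArg (rescale (-1:ℚ)) hAD
    rw [map_mul, map_mul, rescale_X] at h
    rw [show rescale (-1:ℚ) Dd = E (-1) - 1 by rw [hD1, map_sub, map_one, rescale_E]; norm_num] at h
    rw [show rescale (-1:ℚ) (E (1/2)) = E (-1/2) by rw [rescale_E]; norm_num] at h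
    rw [h]
    simp
  have hgh : E (-1/2) * E 1 = E (1/2) := by rw [E_mul]; norm_num
  linear_combination (-(E 1)) * h1 + (-1) * hAD + (rescale (-1:ℚ) A) * hEinv
    + (rescale (-1:ℚ) A) * hD1 + X * hgh

lemma hGA : A = 2 * rescale (1/2 : ℚ) Bb - Bb := by
  apply mul_right_cancel₀ D_ne
  have h2rB : 2 * (rescale (1/2:ℚ) Bb * (E (1/2) - 1)) = X := by
    have h := congrArg (rescale (1/2:ℚ)) hBD
    rw [map_mul, rescale_X] at h
    rw [show rescale (1/2:ℚ) Dd = E (1/2) - 1 by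
      rw [hD1, map_sub, map_one, rescale_E]; norm_num] at h
    rw [h, ← mul_assoc, ← map_ofNat (C (R := ℚ)) 2, ← map_mul]
    norm_num
  linear_combination hAD + hBD + (-(E (1/2) + 1)) * h2rB
    + (-(2 * rescale (1/2:ℚ) Bb)) * hD1 + (2 * rescale (1/2:ℚ) Bb) * hsq

lemma coeff_E (t : ℚ) (n : ℕ) : coeff (R := ℚ) n (E t) = t ^ n / n.factorial := by
  simp [E, coeff_rescale, coeff_exp, Algebra.algebraMap_self_apply, mul_one_div, div_eq_mul_inv]

lemma hdE (t : ℚ) : d⁄dX ℚ (E t) = C (R := ℚ) t * E t := by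
  ext n
  rw [coeff_derivative, coeff_C_mul, coeff_E, coeff_E, Nat.factorial_succ]
  have h1 : ((n+1 : ℕ) : ℚ) ≠ 0 := by positivity
  have h2 : ((n.factorial : ℚ)) ≠ 0 := by exact_mod_cast n.factorial_ne_zero
  field_simp
  push_cast
  ring


lemma hdD : d⁄dX ℚ Dd = E 1 := by
  rw [Dd, map_sub, Derivation.map_one_eq_zero, sub_zero, ← E_one, hdE, E_one, map_one, one_mul]

lemma hd2' : 2 * (A * E 1) + 2 * (Dd * d⁄dX ℚ A) = X * E (1/2) + 2 * E (1/2) := by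
  have h := congrArg (d⁄dX ℚ) hAD
  rw [Derivation.leibniz, Derivation.leibniz, hdD, hdE, derivative_X] at h
  rw [smul_eq_mul, smul_eq_mul, smul_eq_mul, smul_eq_mul] at h
  have hC : (2 : ℚ⟦X⟧) * C (R := ℚ) (1/2) = 1 := by
    rw [← map_ofNat (C (R := ℚ)) 2, ← map_mul]; norm_num
  linear_combination 2 * h + (X * E (1/2)) * hC

lemma hcore : A ^ 3 * (E 1 - E (-1)) = 2 * (X * A) - 2 * (X ^ 2 * d⁄dX ℚ A) := by
  have hne : Dd ^ 3 * E 1 ≠ 0 := by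
    apply mul_ne_zero (pow_ne_zero 3 D_ne)
    intro h
    have h0 := congrArg (coeff (R := ℚ) 0) h
    rw [coeff_E] at h0
    simp at h0
  apply mul_right_cancel₀ hne
  linear_combination
    ((3*X^2*(E (1/2))^2 + 3*X*(E (1/2))*(A*Dd - X*(E (1/2))) + (A*Dd - X*(E (1/2)))^2)
        * (Dd*(E 1 + 1)) - 2*X^2*(E 1)^2*Dd - 2*X*Dd^2*(E 1)) * hAD
    + (X^2*Dd^2*(E 1)) * hd2'
    + (-(A^3*Dd^3)) * hEinv
    + (X^3*(E (1/2))*Dd*(E 1) - A^3*Dd^3*(E 1 + 1)) * hD1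
    + (X^3*(E (1/2))*Dd*(E 1 + 1)) * hsq


lemma E_pow (t : ℚ) (k : ℕ) : E t ^ k = E (k * t) := by
  induction k with
  | zero => simp [E_zero]
  | succ k ih =>
    rw [pow_succ, ih, E_mul]
    congr 1
    push_cast
    ring

lemma key (m : ℕ) : coeff (R := ℚ) (2*m+3) (A ^ (2*m+4) * E (-1)) = 0 := by
  set S := A ^ (2*m+4) with hS
  have h3 : S = A ^ (2*m+1) * A ^ 3 := by
    rw [hS, show 2*m+4 = (2*m+1)+3 by omega, pow_add]
  have hT : S * (E 1 - E (-1))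
      = 2 * (X * A ^ (2*m+2)) - 2 * (X ^ 2 * (A ^ (2*m+1) * d⁄dX ℚ A)) := by
    rw [h3, mul_assoc, hcore, show 2*m+2 = (2*m+1)+1 by omega, pow_succ]
    ring
  have hder : d⁄dX ℚ (A ^ (2*m+2)) = (2*m+2) • (A ^ (2*m+1) * d⁄dX ℚ A) := by
    have h := Derivation.leibniz_pow (d⁄dX ℚ) (a := A) (2*m+2)
    rw [show 2*m+2-1 = 2*m+1 by omega, smul_eq_mul] at h
    exact h
  have hc2 : coeff (R := ℚ) (2*m+1) (A ^ (2*m+1) * d⁄dX ℚ A)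
      = coeff (R := ℚ) (2*m+2) (A ^ (2*m+2)) := by
    have h := congrArg (coeff (R := ℚ) (2*m+1)) hder
    rw [coeff_derivative, map_nsmul, nsmul_eq_mul] at h
    have hne : ((2*m+2 : ℕ) : ℚ) ≠ 0 := by positivity
    have h' : ((2*m+2 : ℕ) : ℚ) * coeff (R := ℚ) (2*m+2) (A ^ (2*m+2))
        = ((2*m+2 : ℕ) : ℚ) * coeff (R := ℚ) (2*m+1) (A ^ (2*m+1) * d⁄dX ℚ A) := by
      rw [← h, show 2*m+1+1 = 2*m+2 by omega]
      push_cast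
      ring
    exact (mul_left_cancel₀ hne h').symm
  have hcT : coeff (R := ℚ) (2*m+3) (S * (E 1 - E (-1))) = 0 := by
    rw [hT, map_sub, show (2:ℚ⟦X⟧) = C (R := ℚ) 2 from (map_ofNat (C (R := ℚ)) 2).symm,
      coeff_C_mul, coeff_C_mul,
      show 2*m+3 = (2*m+2)+1 by omega, coeff_succ_X_mul,
      show 2*m+2+1 = (2*m+1)+2 by omega, coeff_X_pow_mul, hc2,
      show 2*m+1+1 = 2*m+2 by omega, sub_self]
  have hSeven : rescale (-1:ℚ) S = S := by rw [hS, map_pow, hAeven]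
  have h1 : coeff (R := ℚ) (2*m+3) (S * E 1) = - coeff (R := ℚ) (2*m+3) (S * E (-1)) := by
    have h2 : rescale (-1:ℚ) (S * E (-1)) = S * E 1 := by
      rw [map_mul, hSeven]
      congr 1
      rw [E, E, rescale_rescale]
      norm_num [rescale_one]
    rw [← h2, coeff_rescale]
    have hodd : (-1:ℚ) ^ (2*m+3) = -1 := Odd.neg_one_pow ⟨m+1, by ring⟩
    rw [hodd]
    ring
  rw [mul_sub, map_sub, h1] at hcT
  linarith


lemma coeff_A (k : ℕ) : coeff (R := ℚ) k A = (2 * (1/2:ℚ)^k - 1) * (bernoulli k / k.factorial) := by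
  rw [hGA, map_sub, show (2:ℚ⟦X⟧) = C (R := ℚ) 2 from (map_ofNat (C (R := ℚ)) 2).symm, coeff_C_mul,
    coeff_rescale]
  simp only [Bb, bernoulliPowerSeries, coeff_mk, Algebra.algebraMap_self_apply]
  ring

lemma coeff_A_odd (l : ℕ) : coeff (R := ℚ) (2*l+1) A = 0 := by
  rw [coeff_A]
  rcases Nat.eq_zero_or_pos l with h | h
  · subst h; norm_num
  · rw [bernoulli_eq_bernoulli'_of_ne_one (by omega),
      bernoulli'_eq_zero_of_odd ⟨l, by omega⟩ (by omega)]
    simp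

lemma sum_split (f : ℕ → ℚ) (N : ℕ) :
    ∑ k ∈ Finset.range (2*N), f k = ∑ l ∈ Finset.range N, (f (2*l) + f (2*l+1)) := by
  induction N with
  | zero => simp
  | succ N ih =>
    rw [show 2*(N+1) = (2*N+1)+1 by omega, Finset.sum_range_succ, Finset.sum_range_succ, ih,
      Finset.sum_range_succ]
    ring

end StmtAux

open StmtAux in
/-- For every nonnegative integer `m`,
`∑_{l=0}^{m+1} (B_{2l}/(2l)!)·(2^{1-2l} - 1)·B_{2m+3-2l}^{(2m+3)}(m+1/2)/(2m+3-2l)! = 0`. -/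
theorem stmt_2 (m : ℕ) :
    ∑ l ∈ Finset.range (m + 2),
      (bernoulli (2 * l) / ((2 * l).factorial : ℚ)) *
        ((2 : ℚ) ^ ((1 : ℤ) - 2 * (l : ℤ)) - 1) *
        (genBernoulli (2 * m + 3) ((m : ℚ) + 1 / 2) (2 * m + 3 - 2 * l) /
          ((2 * m + 3 - 2 * l).factorial : ℚ)) = 0 := by
  classical
  have hfac : ∀ k : ℕ, ((k.factorial : ℚ)) ≠ 0 := fun k => by
    exact_mod_cast k.factorial_ne_zero
  set F : ℚ⟦X⟧ := bernoulliPowerSeries ℚ ^ (2*m+3) * rescale ((m:ℚ) + 1/2) (exp ℚ) with hF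
  have hgen : ∀ k : ℕ, genBernoulli (2*m+3) ((m:ℚ)+1/2) k / (k.factorial : ℚ) = coeff (R := ℚ) k F := by
    intro k
    simp only [genBernoulli, hF]
    exact mul_div_cancel_left₀ _ (hfac k)
  have hstep : ∀ l ∈ Finset.range (m+2),
      bernoulli (2*l) / ((2*l).factorial : ℚ) * ((2:ℚ)^((1:ℤ) - 2*(l:ℤ)) - 1) *
        (genBernoulli (2*m+3) ((m:ℚ)+1/2) (2*m+3-2*l) / ((2*m+3-2*l).factorial : ℚ))
      = coeff (R := ℚ) (2*l) A * coeff (R := ℚ) (2*m+3-2*l) F := by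
    intro l _
    rw [hgen, coeff_A]
    have h2 : (2:ℚ)^((1:ℤ) - 2*(l:ℤ)) = 2 * (1/2:ℚ)^(2*l) := by
      rw [zpow_sub₀ (by norm_num : (2:ℚ) ≠ 0), zpow_one,
        show (2*(l:ℤ)) = ((2*l : ℕ) : ℤ) by push_cast; ring, zpow_natCast,
        div_pow, one_pow, div_eq_mul_inv, div_eq_mul_inv, one_mul]
    rw [h2]
    ring
  rw [Finset.sum_congr rfl hstep]
  have hodd : ∀ l : ℕ, coeff (R := ℚ) (2*l+1) A * coeff (R := ℚ) (2*m+3-(2*l+1)) F = 0 := by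
    intro l
    rw [coeff_A_odd, zero_mul]
  have hsplit := sum_split (fun k => coeff (R := ℚ) k A * coeff (R := ℚ) (2*m+3-k) F) (m+2)
  simp only [hodd, add_zero] at hsplit
  rw [← hsplit]
  have hmul : ∑ k ∈ Finset.range (2*(m+2)), coeff (R := ℚ) k A * coeff (R := ℚ) (2*m+3-k) F
      = coeff (R := ℚ) (2*m+3) (A * F) := by
    rw [coeff_mul, Finset.Nat.sum_antidiagonal_eq_sum_range_succ_mk,
      show 2*(m+2) = 2*m+3+1 by omega]
  rw [hmul]
  have hAF : A * F = A ^ (2*m+4) * E (-1) := by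
    have h4 : A ^ (2*m+4) * E (-1) = Bb ^ (2*m+4) * E ((m:ℚ)+1) := by
      rw [A, mul_pow, E_pow, mul_assoc, E_mul]
      congr 2
      push_cast
      ring
    have h5 : A * F = Bb ^ (2*m+4) * E ((m:ℚ)+1) := by
      rw [hF, A, show rescale ((m:ℚ)+1/2) (exp ℚ) = E ((m:ℚ)+1/2) from rfl,
        show bernoulliPowerSeries ℚ = Bb from rfl, mul_mul_mul_comm, E_mul,
        show 2*m+4 = 2*m+3+1 by omega, pow_succ]
      congr 1
      · ring
      · congr 1
        push_cast
        ring
    rw [h5, h4]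
  rw [hAF]
  exact key m
end

section
/- Let ϖ be a real antisymmetric 4×4 matrix (indices raised with the Minkowski metric diag(1,-1,-1,-1)), b a four-vector, and define the tilde transform b̃(ϖ)^μ = ∑_{k=0}^∞ (i^k/(k+1)!) (ϖ^k)^μ{}_ν b^ν. Then with Λ = exp(iϖ) acting on four-vectors, the identity ∑_{k=1}^n Λ^{-k} b̃(ϖ) = n · b̃(−nϖ) holds for every positive integer n. -/
open Matrix

/-- The Minkowski metric `diag(1,-1,-1,-1)`. -/
def minkMetric : Matrix (Fin 4) (Fin 4) ℝ := Matrix.diagonal ![1, -1, -1, -1]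

/-- The matrix exponential, as a convergent power series. -/
noncomputable def mexp (A : Matrix (Fin 4) (Fin 4) ℂ) : Matrix (Fin 4) (Fin 4) ℂ :=
  ∑' k : ℕ, ((k.factorial : ℂ))⁻¹ • A ^ k

/-- The tilde transform `ṽ(A) = ∑_{k≥0} (i^k/(k+1)!) A^k v` of a four-vector `v`. -/
noncomputable def tildeVec (A : Matrix (Fin 4) (Fin 4) ℂ) (v : Fin 4 → ℂ) : Fin 4 → ℂ :=
  ∑' k : ℕ, (Complex.I ^ k / ((k + 1).factorial : ℂ)) • (A ^ k).mulVec v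

namespace Stmt16Aux

open Finset

attribute [local instance] Matrix.linftyOpNormedRing Matrix.linftyOpNormedAlgebra
attribute [local instance] Matrix.linfty_opNormOneClass

noncomputable section

abbrev Mat := Matrix (Fin 4) (Fin 4) ℂ

lemma hE (c : ℂ) (M : Mat) :
    Summable fun j : ℕ => ‖(c ^ j / (j.factorial : ℂ)) • M ^ j‖ := by
  apply Summable.of_nonneg_of_le (fun j => norm_nonneg _) (fun j => ?_)
    (Real.summable_pow_div_factorial (‖c‖ * ‖M‖))
  rw [norm_smul, norm_div, norm_pow, Complex.norm_natCast, mul_pow]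
  calc ‖c‖ ^ j / (j.factorial : ℝ) * ‖M ^ j‖
      ≤ ‖c‖ ^ j / (j.factorial : ℝ) * ‖M‖ ^ j := by
        gcongr
        · exact norm_pow_le M j
    _ = ‖c‖ ^ j * ‖M‖ ^ j / (j.factorial : ℝ) := by ring

lemma hG (c : ℂ) (M : Mat) :
    Summable fun j : ℕ => ‖(c ^ j / ((j + 1).factorial : ℂ)) • M ^ j‖ := by
  apply Summable.of_nonneg_of_le (fun j => norm_nonneg _) (fun j => ?_)
    (Real.summable_pow_div_factorial (‖c‖ * ‖M‖))
  rw [norm_smul, norm_div, norm_pow, Complex.norm_natCast, mul_pow]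
  calc ‖c‖ ^ j / ((j + 1).factorial : ℝ) * ‖M ^ j‖
      ≤ ‖c‖ ^ j / (j.factorial : ℝ) * ‖M‖ ^ j := by
        gcongr
        · exact Nat.le_succ j
        · exact norm_pow_le M j
    _ = ‖c‖ ^ j * ‖M‖ ^ j / (j.factorial : ℝ) := by ring

/-- `E c = ∑ (c^j/j!) M^j`. -/
def E (c : ℂ) (M : Mat) : Mat := ∑' j : ℕ, (c ^ j / (j.factorial : ℂ)) • M ^ j

/-- `G c = ∑ (c^j/(j+1)!) M^j`. -/
def G (c : ℂ) (M : Mat) : Mat := ∑' j : ℕ, (c ^ j / ((j + 1).factorial : ℂ)) • M ^ j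

lemma mexp_smul (c : ℂ) (M : Mat) : mexp (c • M) = E c M := by
  unfold mexp E
  refine tsum_congr fun j => ?_
  rw [smul_pow, smul_smul, div_eq_mul_inv, mul_comm]

/-- `mulVec` by a fixed vector, as a continuous linear map in the matrix argument. -/
def mulVecCLM (v : Fin 4 → ℂ) : Mat →L[ℂ] (Fin 4 → ℂ) :=
  LinearMap.toContinuousLinearMap
    { toFun := fun A => A.mulVec v
      map_add' := fun A B => Matrix.add_mulVec A B v
      map_smul' := fun c A => Matrix.smul_mulVec c A v }

lemma tilde_smul (c : ℂ) (M : Mat) (v : Fin 4 → ℂ) :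
    tildeVec (c • M) v = (G (c * Complex.I) M).mulVec v := by
  have h : (G (c * Complex.I) M).mulVec v
      = ∑' j : ℕ, (((c * Complex.I) ^ j / ((j + 1).factorial : ℂ)) • M ^ j).mulVec v := by
    have := (mulVecCLM v).map_tsum
      (f := fun j : ℕ => ((c * Complex.I) ^ j / ((j + 1).factorial : ℂ)) • M ^ j)
      (hG (c * Complex.I) M).of_norm
    exact this
  rw [h]
  refine tsum_congr fun j => ?_
  rw [smul_pow, Matrix.smul_mulVec, Matrix.smul_mulVec, smul_smul]
  congr 1
  rw [mul_pow]
  ring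

lemma tilde_one (M : Mat) (v : Fin 4 → ℂ) :
    tildeVec M v = (G Complex.I M).mulVec v := by
  have := tilde_smul 1 M v
  rwa [one_smul, one_mul] at this

/-- Cauchy product. -/
lemma E_mul_G (c d : ℂ) (M : Mat) :
    E c M * G d M
      = ∑' m : ℕ, (∑ p ∈ antidiagonal m,
          c ^ p.1 / (p.1.factorial : ℂ) * (d ^ p.2 / ((p.2 + 1).factorial : ℂ))) • M ^ m := by
  unfold E G
  refine (tsum_mul_tsum_eq_tsum_sum_antidiagonal_of_summable_norm (hE c M) (hG d M)).trans ?_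
  refine tsum_congr fun m => ?_
  rw [Finset.sum_smul]
  refine Finset.sum_congr rfl fun p hp => ?_
  rw [smul_mul_smul_comm, ← pow_add, (Finset.HasAntidiagonal.mem_antidiagonal.mp hp)]

lemma summable_cauchy (c d : ℂ) (M : Mat) :
    Summable fun m : ℕ => (∑ p ∈ antidiagonal m,
        c ^ p.1 / (p.1.factorial : ℂ) * (d ^ p.2 / ((p.2 + 1).factorial : ℂ))) • M ^ m := by
  refine (summable_sum_mul_antidiagonal_of_summable_mul
    (summable_mul_of_summable_norm (hE c M) (hG d M))).congr fun m => ?_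
  rw [Finset.sum_smul]
  refine Finset.sum_congr rfl fun p hp => ?_
  rw [smul_mul_smul_comm, ← pow_add, (Finset.HasAntidiagonal.mem_antidiagonal.mp hp)]

/-- binomial-type identity for the antidiagonal coefficient sum. -/
lemma coefA (m : ℕ) (x : ℂ) :
    ∑ p ∈ antidiagonal m, x ^ p.1 / (p.1.factorial : ℂ) * (1 / ((p.2 + 1).factorial : ℂ))
      = ((x + 1) ^ (m + 1) - x ^ (m + 1)) / ((m + 1).factorial : ℂ) := by
  have hb : (x + 1) ^ (m + 1) - x ^ (m + 1)
      = ∑ i ∈ range (m + 1), x ^ i * ((m + 1).choose i : ℂ) := by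
    have h1 : (x + 1) ^ (m + 1) = ∑ i ∈ range (m + 2), x ^ i * ((m + 1).choose i : ℂ) := by
      rw [add_pow]
      refine Finset.sum_congr rfl fun i _ => ?_
      rw [one_pow, mul_one]
    rw [h1, Finset.sum_range_succ, Nat.choose_self, Nat.cast_one, mul_one, add_sub_cancel_right]
  rw [Finset.Nat.sum_antidiagonal_eq_sum_range_succ
    (fun i j => x ^ i / (i.factorial : ℂ) * (1 / ((j + 1).factorial : ℂ))), hb, Finset.sum_div]
  refine Finset.sum_congr rfl fun i hi => ?_
  have him : i ≤ m := Nat.lt_succ_iff.mp (Finset.mem_range.mp hi)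
  have hsub : m - i + 1 = m + 1 - i := by omega
  have hkey : ((m + 1).choose i * i.factorial * (m + 1 - i).factorial : ℂ)
      = ((m + 1).factorial : ℂ) := by
    exact_mod_cast congrArg (Nat.cast : ℕ → ℂ)
      (Nat.choose_mul_factorial_mul_factorial (Nat.le_succ_of_le him))
  have h1 : ((i.factorial : ℂ)) ≠ 0 := Nat.cast_ne_zero.mpr i.factorial_ne_zero
  have h2 : (((m + 1 - i).factorial : ℂ)) ≠ 0 := Nat.cast_ne_zero.mpr (m + 1 - i).factorial_ne_zero
  have h3 : (((m + 1).factorial : ℂ)) ≠ 0 := Nat.cast_ne_zero.mpr (m + 1).factorial_ne_zero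
  rw [hsub]
  field_simp
  linear_combination (-(x ^ i)) * hkey

/-- telescoping sum. -/
lemma coefB (n m : ℕ) :
    ∑ k ∈ Icc 1 n, ((1 - (k : ℂ)) ^ (m + 1) - (-(k : ℂ)) ^ (m + 1))
      = (n : ℂ) * (-(n : ℂ)) ^ m := by
  induction n with
  | zero => simp
  | succ n ih =>
    rw [Finset.sum_Icc_succ_top (by omega : 1 ≤ n + 1), ih]
    push_cast
    ring

lemma scalar (n m : ℕ) :
    ∑ k ∈ Icc 1 n, ∑ p ∈ antidiagonal m,
        (-(k : ℂ) * Complex.I) ^ p.1 / (p.1.factorial : ℂ)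
          * (Complex.I ^ p.2 / ((p.2 + 1).factorial : ℂ))
      = (n : ℂ) * ((-(n : ℂ) * Complex.I) ^ m / ((m + 1).factorial : ℂ)) := by
  have hinner : ∀ k : ℕ, ∑ p ∈ antidiagonal m,
      (-(k : ℂ) * Complex.I) ^ p.1 / (p.1.factorial : ℂ)
        * (Complex.I ^ p.2 / ((p.2 + 1).factorial : ℂ))
      = Complex.I ^ m
          * (((-(k : ℂ) + 1) ^ (m + 1) - (-(k : ℂ)) ^ (m + 1)) / ((m + 1).factorial : ℂ)) := by
    intro k
    rw [← coefA m (-(k : ℂ)), Finset.mul_sum]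
    refine Finset.sum_congr rfl fun p hp => ?_
    have hpm : p.1 + p.2 = m := Finset.HasAntidiagonal.mem_antidiagonal.mp hp
    rw [mul_pow, ← hpm, pow_add]
    ring
  calc ∑ k ∈ Icc 1 n, ∑ p ∈ antidiagonal m,
        (-(k : ℂ) * Complex.I) ^ p.1 / (p.1.factorial : ℂ)
          * (Complex.I ^ p.2 / ((p.2 + 1).factorial : ℂ))
      = ∑ k ∈ Icc 1 n, Complex.I ^ m
          * (((-(k : ℂ) + 1) ^ (m + 1) - (-(k : ℂ)) ^ (m + 1)) / ((m + 1).factorial : ℂ)) :=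
        Finset.sum_congr rfl fun k _ => hinner k
    _ = Complex.I ^ m
          * ((∑ k ∈ Icc 1 n, ((1 - (k : ℂ)) ^ (m + 1) - (-(k : ℂ)) ^ (m + 1)))
            / ((m + 1).factorial : ℂ)) := by
        rw [Finset.sum_div, Finset.mul_sum]
        refine Finset.sum_congr rfl fun k _ => ?_
        ring_nf
    _ = (n : ℂ) * ((-(n : ℂ) * Complex.I) ^ m / ((m + 1).factorial : ℂ)) := by
        rw [coefB n m, mul_pow]
        ring

/-- The core matrix identity. -/
lemma main (n : ℕ) (M : Mat) :
    ∑ k ∈ Icc 1 n, E (-(k : ℂ) * Complex.I) M * G Complex.I M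
      = (n : ℂ) • G (-(n : ℂ) * Complex.I) M := by
  have hL : ∑ k ∈ Icc 1 n, E (-(k : ℂ) * Complex.I) M * G Complex.I M
      = ∑' m : ℕ, (∑ k ∈ Icc 1 n, ∑ p ∈ antidiagonal m,
          (-(k : ℂ) * Complex.I) ^ p.1 / (p.1.factorial : ℂ)
            * (Complex.I ^ p.2 / ((p.2 + 1).factorial : ℂ))) • M ^ m := by
    calc ∑ k ∈ Icc 1 n, E (-(k : ℂ) * Complex.I) M * G Complex.I M
        = ∑ k ∈ Icc 1 n, ∑' m : ℕ, (∑ p ∈ antidiagonal m,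
            (-(k : ℂ) * Complex.I) ^ p.1 / (p.1.factorial : ℂ)
              * (Complex.I ^ p.2 / ((p.2 + 1).factorial : ℂ))) • M ^ m :=
          Finset.sum_congr rfl fun k _ => E_mul_G _ _ M
      _ = ∑' m : ℕ, ∑ k ∈ Icc 1 n, (∑ p ∈ antidiagonal m,
            (-(k : ℂ) * Complex.I) ^ p.1 / (p.1.factorial : ℂ)
              * (Complex.I ^ p.2 / ((p.2 + 1).factorial : ℂ))) • M ^ m :=
          (Summable.tsum_finsetSum (f := fun (k : ℕ) (m : ℕ) => (∑ p ∈ antidiagonal m,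
            (-(k : ℂ) * Complex.I) ^ p.1 / (p.1.factorial : ℂ)
              * (Complex.I ^ p.2 / ((p.2 + 1).factorial : ℂ))) • M ^ m) (s := Icc 1 n)
            (fun k _ => summable_cauchy (-(k : ℂ) * Complex.I) Complex.I M)).symm
      _ = _ := tsum_congr fun m => (Finset.sum_smul).symm
  rw [hL]
  unfold G
  refine Eq.trans ?_ (Summable.tsum_const_smul (n : ℂ) (hG (-(n : ℂ) * Complex.I) M).of_norm)
  refine tsum_congr fun m => ?_
  rw [smul_smul, scalar n m]

end

end Stmt16Aux

open Stmt16Aux in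
/-- For a real antisymmetric (with respect to the Minkowski metric) matrix `ϖ`, a four-vector
`b`, and `Λ = exp(iϖ)` with `Λ^{-k} = exp(-ikϖ)`, the identity
`∑_{k=1}^n Λ^{-k} b̃(ϖ) = n·b̃(-nϖ)` holds for every positive integer `n`. -/
theorem stmt_16 (ϖ : Matrix (Fin 4) (Fin 4) ℝ)
    (hanti : (minkMetric * ϖ)ᵀ = -(minkMetric * ϖ))
    (b : Fin 4 → ℝ) (n : ℕ) (hn : 0 < n) :
    ∑ k ∈ Finset.Icc 1 n,
        (mexp ((-(k : ℂ) * Complex.I) • (ϖ.map (Complex.ofReal)))).mulVec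
          (tildeVec (ϖ.map (Complex.ofReal)) (fun i => ((b i : ℝ) : ℂ)))
      = (n : ℂ) • tildeVec ((-(n : ℂ)) • (ϖ.map (Complex.ofReal)))
          (fun i => ((b i : ℝ) : ℂ)) := by
  set M : Mat := ϖ.map (Complex.ofReal) with hM
  set v : Fin 4 → ℂ := fun i => ((b i : ℝ) : ℂ) with hv
  calc ∑ k ∈ Finset.Icc 1 n, (mexp ((-(k : ℂ) * Complex.I) • M)).mulVec (tildeVec M v)
      = ∑ k ∈ Finset.Icc 1 n,
          (E (-(k : ℂ) * Complex.I) M * G Complex.I M).mulVec v := by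
        refine Finset.sum_congr rfl fun k _ => ?_
        rw [mexp_smul, tilde_one, Matrix.mulVec_mulVec]
    _ = (∑ k ∈ Finset.Icc 1 n, E (-(k : ℂ) * Complex.I) M * G Complex.I M).mulVec v := by
        exact (map_sum (mulVecCLM v) _ _).symm
    _ = ((n : ℂ) • G (-(n : ℂ) * Complex.I) M).mulVec v := by rw [main]
    _ = (n : ℂ) • tildeVec ((-(n : ℂ)) • M) v := by
        rw [tilde_smul, Matrix.smul_mulVec]
end
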